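/- arXiv:2402.13087 — 2 statements merged into one kernel-verified Lean document; each statement's English description precedes it below -/
import Mathlib

section
/- Let Γ be a finite type, let p and p' be probability mass functions on Γ with p'(γ) > 0 for every γ ∈ Γ, let ξ be a probability mass function on the positive integers, and let α > 1 be real. Let ĝ : Γ → ℝ be any score function (possibly not injective), and let g* : Γ → ℝ be any injective score function refining the weak order of ĝ, i.e. ĝ(x) < ĝ(y) implies g*(x) < g*(y) for all x, y ∈ Γ. Then D_α(F_{ξ,ĝ}[p] ‖ F_{ξ,ĝ}[p']) ≤ D_α(F_{ξ,g*}[p] ‖ F_{ξ,g*}[p']), where F_{ξ,g}[p](γ) = Σ_{k≥1} ξ(k)·F_{k,g}[p](γ) is the ξ-mixture of the best-of-k selection distributions. -/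
/-!
Averaging over the `ĝ`-tie classes undoes the tie-breaking by `g*`. Since `g*` refines `ĝ`,
a tie class is an interval of the `g*`-order, so the best-of-`k` probabilities of its members
under `g*` telescope to the total mass the class receives under `ĝ`, and uniform tie-breaking
shares this mass equally. Thus `F_{ξ,ĝ}[q]` is the image of `F_{ξ,g*}[q]` under one fixed
Markov kernel, averaging over `ĝ`-fibers, for `q = p` and `q = p'` alike, and the Rényi
divergence does not increase under it: for two distributions `M`, `N` restricted to a fiber,
Jensen's inequality for `t ↦ t ^ α` with weights proportional to `N` gives
`(Σ M) ^ α (Σ N) ^ (1 - α) ≤ Σ M ^ α N ^ (1 - α)`.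
-/

open scoped Classical BigOperators

/-- Rényi divergence of order `α` between two pmfs `M`, `N` on a finite type:
`D_α(M‖N) = (1/(α−1))·log(Σ_x M(x)^α·N(x)^{1−α})` (real powers). -/
noncomputable def renyiDiv {Γ : Type*} [Fintype Γ] (α : ℝ) (M N : Γ → ℝ) : ℝ :=
  (1 / (α - 1)) * Real.log (∑ x, M x ^ α * N x ^ (1 - α))

/-- Best-of-`k` selection distribution with uniform tie-breaking: given a pmf `p` on a
finite type `Γ`, a score function `g`, and `k`, the probability of outputting `γ` is
`(1/|{i : g i = g γ}|)·[(Σ_{i : g i ≤ g γ} p i)^k − (Σ_{i : g i < g γ} p i)^k]`. -/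
noncomputable def bestOfK {Γ : Type*} [Fintype Γ] (p : Γ → ℝ) (g : Γ → ℝ) (k : ℕ)
    (γ : Γ) : ℝ :=
  (1 / (Finset.univ.filter (fun i => g i = g γ)).card) *
    ((∑ i ∈ Finset.univ.filter (fun i => g i ≤ g γ), p i) ^ k -
      (∑ i ∈ Finset.univ.filter (fun i => g i < g γ), p i) ^ k)

/-- The `ξ`-mixture of the best-of-`k` selection distributions:
`F_{ξ,g}[p](γ) = Σ_{k≥1} ξ(k)·F_{k,g}[p](γ)`. -/
noncomputable def bestOfXi {Γ : Type*} [Fintype Γ] (p : Γ → ℝ) (g : Γ → ℝ)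
    (ξ : ℕ+ → ℝ) (γ : Γ) : ℝ :=
  ∑' k : ℕ+, ξ k * bestOfK p g (k : ℕ) γ

open Finset Real

noncomputable def fiberAvg {ι β : Type*} [Fintype ι] [DecidableEq β] (f : ι → β)
    (M : ι → ℝ) (x : ι) : ℝ :=
  (1 / (univ.filter (fun y => f y = f x)).card) *
    ∑ y ∈ univ.filter (fun y => f y = f x), M y

theorem rpow_sum_mul_rpow_sum_le_sum {ι : Type*} (s : Finset ι) {M N : ι → ℝ}
    (hM : ∀ x ∈ s, 0 ≤ M x) (hN : ∀ x ∈ s, 0 < N x) {α : ℝ} (hα : 1 ≤ α) :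
    (∑ x ∈ s, M x) ^ α * (∑ x ∈ s, N x) ^ (1 - α)
      ≤ ∑ x ∈ s, M x ^ α * N x ^ (1 - α) := by
  rcases s.eq_empty_or_nonempty with rfl | hs
  · simp [zero_rpow (by linarith : α ≠ 0)]
  set SN := ∑ x ∈ s, N x
  have hSN : 0 < SN := sum_pos hN hs
  have jensen := rpow_arith_mean_le_arith_mean_rpow s (fun x => N x / SN) (fun x => M x / N x)
    (fun x hx => by have := hN x hx; positivity) (by rw [← sum_div, div_self hSN.ne'])
    (fun x hx => div_nonneg (hM x hx) (hN x hx).le) hα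
  have h_mean : ∑ x ∈ s, N x / SN * (M x / N x) = (∑ x ∈ s, M x) / SN := by
    rw [sum_div]
    refine sum_congr rfl fun x hx => ?_
    field_simp [(hN x hx).ne']
  have h_mean_rpow : ∑ x ∈ s, N x / SN * (M x / N x) ^ α
      = (∑ x ∈ s, M x ^ α * N x ^ (1 - α)) / SN := by
    rw [sum_div]
    refine sum_congr rfl fun x hx => ?_
    rw [div_rpow (hM x hx) (hN x hx).le, rpow_sub (hN x hx), rpow_one]
    field_simp [(hN x hx).ne', (rpow_pos_of_pos (hN x hx) α).ne']
  rw [h_mean, h_mean_rpow] at jensen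
  calc (∑ x ∈ s, M x) ^ α * SN ^ (1 - α) = SN * ((∑ x ∈ s, M x) / SN) ^ α := by
        rw [div_rpow (sum_nonneg hM) hSN.le, rpow_sub hSN, rpow_one]
        field_simp
    _ ≤ SN * ((∑ x ∈ s, M x ^ α * N x ^ (1 - α)) / SN) := by gcongr
    _ = ∑ x ∈ s, M x ^ α * N x ^ (1 - α) := mul_div_cancel₀ _ hSN.ne'

section FiberAvg

variable {ι β : Type*} [Fintype ι] [DecidableEq β] (f : ι → β)

theorem card_fiber_pos (x : ι) : 0 < (univ.filter (fun y => f y = f x)).card :=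
  card_pos.2 ⟨x, by simp⟩

theorem fiberAvg_nonneg {M : ι → ℝ} (hM : ∀ x, 0 ≤ M x) (x : ι) : 0 ≤ fiberAvg f M x :=
  mul_nonneg (by positivity) (sum_nonneg fun y _ => hM y)

theorem fiberAvg_pos {M : ι → ℝ} (hM : ∀ x, 0 ≤ M x) {x : ι} (hx : 0 < M x) :
    0 < fiberAvg f M x := by
  have := card_fiber_pos f x
  exact mul_pos (by positivity) (sum_pos' (fun y _ => hM y) ⟨x, by simp, hx⟩)

theorem sum_fiberAvg (M : ι → ℝ) : ∑ x, fiberAvg f M x = ∑ x, M x := by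
  have hmaps : ∀ x ∈ (univ : Finset ι), f x ∈ univ.image f :=
    fun x _ => mem_image_of_mem f (mem_univ x)
  rw [← sum_fiberwise_of_maps_to hmaps, ← sum_fiberwise_of_maps_to hmaps]
  refine sum_congr rfl fun b hb => ?_
  obtain ⟨x₀, -, rfl⟩ := mem_image.1 hb
  have h_const :
      ∀ x ∈ univ.filter (fun y => f y = f x₀), fiberAvg f M x = fiberAvg f M x₀ :=
    fun x hx => by simp only [fiberAvg, (mem_filter.1 hx).2]
  have := card_fiber_pos f x₀
  rw [sum_congr rfl h_const, sum_const, nsmul_eq_mul, fiberAvg]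
  field_simp

theorem fiberAvg_rpow_mul_rpow_le {M N : ι → ℝ} (hM : ∀ x, 0 ≤ M x) (hN : ∀ x, 0 < N x)
    {α : ℝ} (hα : 1 ≤ α) (x : ι) :
    fiberAvg f M x ^ α * fiberAvg f N x ^ (1 - α)
      ≤ fiberAvg f (fun y => M y ^ α * N y ^ (1 - α)) x := by
  simp only [fiberAvg]
  set c : ℝ := 1 / (univ.filter (fun y => f y = f x)).card
  set C := univ.filter (fun y => f y = f x)
  have hc : 0 < c := by
    have := card_fiber_pos f x
    positivity
  have hc_rpow : c ^ α * c ^ (1 - α) = c := by rw [← rpow_add hc, add_sub_cancel, rpow_one]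
  rw [mul_rpow hc.le (sum_nonneg fun y _ => hM y),
    mul_rpow hc.le (sum_nonneg fun y _ => (hN y).le)]
  calc c ^ α * (∑ y ∈ C, M y) ^ α * (c ^ (1 - α) * (∑ y ∈ C, N y) ^ (1 - α))
      = c * ((∑ y ∈ C, M y) ^ α * (∑ y ∈ C, N y) ^ (1 - α)) := by
        linear_combination ((∑ y ∈ C, M y) ^ α * (∑ y ∈ C, N y) ^ (1 - α)) * hc_rpow
    _ ≤ c * ∑ y ∈ C, M y ^ α * N y ^ (1 - α) :=
      mul_le_mul_of_nonneg_left
        (rpow_sum_mul_rpow_sum_le_sum _ (fun y _ => hM y) (fun y _ => hN y) hα) hc.le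

theorem renyiDiv_fiberAvg_le {α : ℝ} (hα : 1 < α) {M N : ι → ℝ} (hM : ∀ x, 0 ≤ M x)
    (hM_pos : ∃ x, 0 < M x) (hN : ∀ x, 0 < N x) :
    renyiDiv α (fiberAvg f M) (fiberAvg f N) ≤ renyiDiv α M N := by
  obtain ⟨x₀, hx₀⟩ := hM_pos
  have hNavg : ∀ x, 0 < fiberAvg f N x := fun x => fiberAvg_pos f (fun y => (hN y).le) (hN x)
  have h_pos : 0 < ∑ x, fiberAvg f M x ^ α * fiberAvg f N x ^ (1 - α) := by
    refine sum_pos' (fun x _ => ?_) ⟨x₀, mem_univ _, ?_⟩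
    · have := fiberAvg_nonneg f hM x
      have := hNavg x
      positivity
    · have := fiberAvg_pos f hM hx₀
      have := hNavg x₀
      positivity
  have h_le : ∑ x, fiberAvg f M x ^ α * fiberAvg f N x ^ (1 - α)
      ≤ ∑ x, M x ^ α * N x ^ (1 - α) := by
    rw [← sum_fiberAvg f fun x => M x ^ α * N x ^ (1 - α)]
    exact sum_le_sum fun x _ => fiberAvg_rpow_mul_rpow_le f hM hN hα.le x
  have := sub_pos.2 hα
  unfold renyiDiv
  gcongr

end FiberAvg

theorem sum_sub_telescope_of_injOn {ι : Type*} [DecidableEq ι] {g : ι → ℝ} {s : Finset ι}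
    (hg : Set.InjOn g s) (F : ℝ → ℝ) (p : ι → ℝ) :
    ∑ x ∈ s, (F (∑ y ∈ s.filter (fun y => g y ≤ g x), p y)
        - F (∑ y ∈ s.filter (fun y => g y < g x), p y))
      = F (∑ y ∈ s, p y) - F 0 := by
  induction s using induction_on_max_value g with
  | empty => simp
  | insert a s ha hmax ih =>
    have hlt : ∀ x ∈ s, g x < g a := fun x hx =>
      (hmax x hx).lt_of_ne fun h => ha (hg (mem_insert_of_mem hx) (mem_insert_self a s) h ▸ hx)
    have hle_a : (insert a s).filter (fun y => g y ≤ g a) = insert a s :=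
      filter_true_of_mem fun y hy => (mem_insert.1 hy).elim (fun h => h ▸ le_rfl) (hmax y)
    have hlt_a : (insert a s).filter (fun y => g y < g a) = s := by
      rw [filter_insert, if_neg (lt_irrefl _), filter_true_of_mem hlt]
    have h_le : ∀ x ∈ s, (insert a s).filter (fun y => g y ≤ g x)
        = s.filter (fun y => g y ≤ g x) := fun x hx => by
      rw [filter_insert, if_neg (hlt x hx).not_ge]
    have h_lt : ∀ x ∈ s, (insert a s).filter (fun y => g y < g x)
        = s.filter (fun y => g y < g x) := fun x hx => by
      rw [filter_insert, if_neg (hlt x hx).le.not_gt]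
    have h_rest : ∑ x ∈ s, (F (∑ y ∈ (insert a s).filter (fun y => g y ≤ g x), p y)
        - F (∑ y ∈ (insert a s).filter (fun y => g y < g x), p y))
          = F (∑ y ∈ s, p y) - F 0 := by
      rw [← ih (hg.mono (subset_insert a s))]
      exact sum_congr rfl fun x hx => by rw [h_le x hx, h_lt x hx]
    rw [sum_insert ha, hle_a, hlt_a, h_rest]
    ring

section BestOfK

variable {Γ : Type*} [Fintype Γ] {p : Γ → ℝ} {ξ : ℕ+ → ℝ}

theorem sum_filter_le_eq_add (g q : Γ → ℝ) (γ : Γ) :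
    ∑ i ∈ univ.filter (fun i => g i ≤ g γ), q i
      = ∑ i ∈ univ.filter (fun i => g i < g γ), q i
        + ∑ i ∈ univ.filter (fun i => g i = g γ), q i := by
  rw [← sum_union (disjoint_filter.2 fun i _ h => h.ne), ← filter_or]
  exact sum_congr (filter_congr fun i _ => le_iff_lt_or_eq) fun _ _ => rfl

theorem sum_filter_of_refines {ghat gstar : Γ → ℝ}
    (href : ∀ x y, ghat x < ghat y → gstar x < gstar y)
    {R : ℝ → ℝ → Prop} [DecidableRel R]
    (hR_of_lt : ∀ {u v}, u < v → R u v) (hR_of_gt : ∀ {u v}, v < u → ¬ R u v)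
    (q : Γ → ℝ) (x : Γ) :
    ∑ i ∈ univ.filter (fun i => R (gstar i) (gstar x)), q i
      = ∑ i ∈ univ.filter (fun i => ghat i < ghat x), q i
        + ∑ i ∈ (univ.filter (fun i => ghat i = ghat x)).filter
            (fun i => R (gstar i) (gstar x)), q i := by
  rw [filter_filter, ← sum_union (disjoint_filter.2 fun i _ h h' => h.ne h'.1), ← filter_or]
  refine sum_congr (filter_congr fun i _ => ?_) fun _ _ => rfl
  rcases lt_trichotomy (ghat i) (ghat x) with h | h | h
  · simp [h, hR_of_lt (href _ _ h)]
  · simp [h]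
  · simp [h.not_gt, h.ne', hR_of_gt (href _ _ h)]

theorem bestOfK_eq_fiberAvg (p : Γ → ℝ) {ghat gstar : Γ → ℝ}
    (hinj : Function.Injective gstar)
    (href : ∀ x y, ghat x < ghat y → gstar x < gstar y) (k : ℕ) :
    bestOfK p ghat k = fiberAvg ghat (bestOfK p gstar k) := by
  funext γ
  set C := univ.filter (fun i => ghat i = ghat γ)
  set c := ∑ i ∈ univ.filter (fun i => ghat i < ghat γ), p i
  have h_singleton : ∀ x, univ.filter (fun i => gstar i = gstar x) = {x} := fun x => by
    ext i
    simp [hinj.eq_iff]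
  have h_member : ∀ x ∈ C, bestOfK p gstar k x
      = (c + ∑ i ∈ C.filter (fun i => gstar i ≤ gstar x), p i) ^ k
        - (c + ∑ i ∈ C.filter (fun i => gstar i < gstar x), p i) ^ k := by
    intro x hx
    have hx' : ghat x = ghat γ := (mem_filter.1 hx).2
    rw [bestOfK, h_singleton, card_singleton,
      sum_filter_of_refines href (R := (· ≤ ·)) le_of_lt not_le.2,
      sum_filter_of_refines href (R := (· < ·)) id lt_asymm, hx',
      Nat.cast_one, div_one, one_mul]
  rw [fiberAvg, sum_congr rfl h_member,
    sum_sub_telescope_of_injOn hinj.injOn (fun t => (c + t) ^ k),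
    bestOfK, sum_filter_le_eq_add ghat p γ, add_zero]

theorem pow_sum_filter_lt_le_pow_sum_filter_le (hp : ∀ x, 0 ≤ p x) (g : Γ → ℝ) (k : ℕ)
    (γ : Γ) :
    (∑ i ∈ univ.filter (fun i => g i < g γ), p i) ^ k
      ≤ (∑ i ∈ univ.filter (fun i => g i ≤ g γ), p i) ^ k := by
  refine pow_le_pow_left₀ (sum_nonneg fun i _ => hp i) ?_ k
  rw [sum_filter_le_eq_add]
  exact le_add_of_nonneg_right (sum_nonneg fun i _ => hp i)

theorem bestOfK_nonneg (hp : ∀ x, 0 ≤ p x) (g : Γ → ℝ) (k : ℕ) (γ : Γ) :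
    0 ≤ bestOfK p g k γ :=
  mul_nonneg (by positivity) (sub_nonneg.2 (pow_sum_filter_lt_le_pow_sum_filter_le hp g k γ))

theorem bestOfK_pos (hp : ∀ x, 0 ≤ p x) (g : Γ → ℝ) {k : ℕ} (hk : k ≠ 0) {γ : Γ}
    (hγ : 0 < p γ) : 0 < bestOfK p g k γ := by
  have := card_fiber_pos g γ
  refine mul_pos (by positivity)
    (sub_pos.2 (pow_lt_pow_left₀ ?_ (sum_nonneg fun i _ => hp i) hk))
  rw [sum_filter_le_eq_add]
  exact lt_add_of_pos_right _ (sum_pos' (fun i _ => hp i) ⟨γ, by simp, hγ⟩)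

theorem bestOfK_le_one (hp : ∀ x, 0 ≤ p x) (hp1 : ∑ x, p x = 1) (g : Γ → ℝ) (k : ℕ) (γ : Γ) :
    bestOfK p g k γ ≤ 1 := by
  have h_le_one : ∑ i ∈ univ.filter (fun i => g i ≤ g γ), p i ≤ 1 :=
    hp1 ▸ sum_le_sum_of_subset_of_nonneg (filter_subset _ _) fun i _ _ => hp i
  have h_card : (1 : ℝ) / (univ.filter (fun i => g i = g γ)).card ≤ 1 := by
    rw [div_le_one (by exact_mod_cast card_fiber_pos g γ)]
    exact_mod_cast card_fiber_pos g γ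
  calc bestOfK p g k γ ≤ 1 * (∑ i ∈ univ.filter (fun i => g i ≤ g γ), p i) ^ k :=
        mul_le_mul h_card (sub_le_self _ (pow_nonneg (sum_nonneg fun i _ => hp i) k))
          (sub_nonneg.2 (pow_sum_filter_lt_le_pow_sum_filter_le hp g k γ)) zero_le_one
    _ ≤ 1 := by
        rw [one_mul]
        exact pow_le_one₀ (sum_nonneg fun i _ => hp i) h_le_one

theorem summable_mul_bestOfK (hp : ∀ x, 0 ≤ p x) (hp1 : ∑ x, p x = 1) (hξ0 : ∀ k, 0 ≤ ξ k)
    (hξ : Summable ξ) (g : Γ → ℝ) (γ : Γ) :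
    Summable fun k : ℕ+ => ξ k * bestOfK p g k γ :=
  hξ.of_nonneg_of_le (fun k => mul_nonneg (hξ0 k) (bestOfK_nonneg hp g k γ))
    fun k => mul_le_of_le_one_right (hξ0 k) (bestOfK_le_one hp hp1 g k γ)

theorem bestOfXi_eq_fiberAvg (hp : ∀ x, 0 ≤ p x) (hp1 : ∑ x, p x = 1) (hξ0 : ∀ k, 0 ≤ ξ k)
    (hξ : Summable ξ) {ghat gstar : Γ → ℝ}
    (hinj : Function.Injective gstar) (href : ∀ x y, ghat x < ghat y → gstar x < gstar y) :
    bestOfXi p ghat ξ = fiberAvg ghat (bestOfXi p gstar ξ) := by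
  funext γ
  simp only [bestOfXi, bestOfK_eq_fiberAvg p hinj href, fiberAvg]
  rw [← Summable.tsum_finsetSum fun x _ => summable_mul_bestOfK hp hp1 hξ0 hξ gstar x,
    ← tsum_mul_left]
  exact tsum_congr fun k => by rw [mul_left_comm, mul_sum]

theorem bestOfXi_nonneg (hp : ∀ x, 0 ≤ p x) (hξ0 : ∀ k, 0 ≤ ξ k) (g : Γ → ℝ) (γ : Γ) :
    0 ≤ bestOfXi p g ξ γ :=
  tsum_nonneg fun k => mul_nonneg (hξ0 k) (bestOfK_nonneg hp g k γ)

theorem bestOfXi_pos (hp : ∀ x, 0 ≤ p x) (hp1 : ∑ x, p x = 1) (hξ0 : ∀ k, 0 ≤ ξ k)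
    (hξ : Summable ξ) {k₀ : ℕ+} (hk₀ : 0 < ξ k₀)
    (g : Γ → ℝ) {γ : Γ} (hγ : 0 < p γ) : 0 < bestOfXi p g ξ γ :=
  (summable_mul_bestOfK hp hp1 hξ0 hξ g γ).tsum_pos
    (fun k => mul_nonneg (hξ0 k) (bestOfK_nonneg hp g k γ)) k₀
    (mul_pos hk₀ (bestOfK_pos hp g k₀.ne_zero hγ))

end BestOfK

/-- for pmfs `p`, `p'` (with `p'` strictly positive) on a finite type, a pmf
`ξ` on the positive integers, `α > 1`, any score function `ĝ` and any injective score
function `g*` refining the weak order of `ĝ`,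
`D_α(F_{ξ,ĝ}[p] ‖ F_{ξ,ĝ}[p']) ≤ D_α(F_{ξ,g*}[p] ‖ F_{ξ,g*}[p'])`. -/
theorem stmt_3 {Γ : Type*} [Fintype Γ] (p p' : Γ → ℝ) (hp0 : ∀ x, 0 ≤ p x)
    (hp1 : ∑ x, p x = 1) (hp'0 : ∀ x, 0 < p' x) (hp'1 : ∑ x, p' x = 1)
    (ξ : ℕ+ → ℝ) (hξ0 : ∀ k, 0 ≤ ξ k) (hξ1 : ∑' k, ξ k = 1) (α : ℝ) (hα : 1 < α)
    (ghat gstar : Γ → ℝ) (hinj : Function.Injective gstar)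
    (href : ∀ x y, ghat x < ghat y → gstar x < gstar y) :
    renyiDiv α (bestOfXi p ghat ξ) (bestOfXi p' ghat ξ) ≤
      renyiDiv α (bestOfXi p gstar ξ) (bestOfXi p' gstar ξ) := by
  have hξ : Summable ξ := by
    by_contra h
    simp [tsum_eq_zero_of_not_summable h] at hξ1
  obtain ⟨k₀, hk₀⟩ : ∃ k, 0 < ξ k := by
    by_contra! h
    simp [funext fun k => le_antisymm (h k) (hξ0 k)] at hξ1
  obtain ⟨γ, -, hγ⟩ : ∃ γ ∈ univ, 0 < p γ := exists_lt_of_sum_lt (by simp [hp1])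
  have hp'0' : ∀ x, 0 ≤ p' x := fun x => (hp'0 x).le
  rw [bestOfXi_eq_fiberAvg hp0 hp1 hξ0 hξ hinj href,
    bestOfXi_eq_fiberAvg hp'0' hp'1 hξ0 hξ hinj href]
  exact renyiDiv_fiberAvg_le ghat hα (bestOfXi_nonneg hp0 hξ0 gstar)
    ⟨γ, bestOfXi_pos hp0 hp1 hξ0 hξ hk₀ gstar hγ⟩
    fun x => bestOfXi_pos hp'0' hp'1 hξ0 hξ hk₀ gstar (hp'0 x)
end

section
/- Let μ > 0 and let P and P' be probability measures on a measurable space. Then the following are equivalent: (i) both (P, P') and (P', P) satisfy the trade-off bound G_μ; (ii) for every ε ≥ 0, P and P' are (ε, δ(ε))-indistinguishable in both orders, where δ(ε) = Φ(−ε/μ + μ/2) − e^ε·Φ(−ε/μ − μ/2). -/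
open MeasureTheory

/-- The pair `(P, P')` satisfies the trade-off bound `f` if every randomized test (a
measurable `φ` with values in `[0,1]`) has type II error `∫ (1−φ) dP'` at least `f`
evaluated at its type I error `∫ φ dP`. -/
def SatisfiesTradeoff {Ω : Type*} [MeasurableSpace Ω] (P P' : Measure Ω)
    (f : ℝ → ℝ) : Prop :=
  ∀ φ : Ω → ℝ, Measurable φ → (∀ ω, φ ω ∈ Set.Icc (0 : ℝ) 1) →
    f (∫ ω, φ ω ∂P) ≤ ∫ ω, (1 - φ ω) ∂P'

/-- Measures `μ` and `ν` are `(ε,δ)`-indistinguishable if `μ(S) ≤ e^ε·ν(S) + δ` for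
every measurable set `S`. -/
def Indist {Ω : Type*} [MeasurableSpace Ω] (ε δ : ℝ) (μ ν : Measure Ω) : Prop :=
  ∀ S : Set Ω, MeasurableSet S →
    μ S ≤ ENNReal.ofReal (Real.exp ε) * ν S + ENNReal.ofReal δ

/-- `Φ`, the CDF of the standard Gaussian measure `N(0,1)` on `ℝ`. -/
noncomputable def stdGaussianCDF (x : ℝ) : ℝ :=
  ((ProbabilityTheory.gaussianReal 0 1) (Set.Iic x)).toReal

/-- `Φ⁻¹`, the inverse of the standard Gaussian CDF (on `(0,1)`). -/
noncomputable def stdGaussianCDFInv : ℝ → ℝ := Function.invFun stdGaussianCDF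

/-- `G_μ(x) = Φ(Φ⁻¹(1−x) − μ)` for `x ∈ (0,1)`, with `G_μ(0) = 1` and `G_μ(1) = 0`. -/
noncomputable def Gmu (μ : ℝ) (x : ℝ) : ℝ :=
  if x ≤ 0 then 1 else if 1 ≤ x then 0
  else stdGaussianCDF (stdGaussianCDFInv (1 - x) - μ)

/-!
Write `y = Φ(s)`. Then `1 - G_μ(y) = Φ(s + μ)`, and `s ↦ Φ(s + μ) - e^ε Φ(s)` is maximal at
`s = -ε/μ - μ/2`, with maximum `δ(ε)`. So every line `y ↦ 1 - δ(ε) - e^ε y` lies below `G_μ`, and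
for `ε = -sμ - μ²/2 ≥ 0` it touches `G_μ` at `Φ(s)`; for `s > -μ/2` the reflection of a line does.
The trade-off bound applied to indicator tests hence gives indistinguishability. Conversely, by the
layer cake formula indistinguishability on sets passes to `[0,1]`-valued tests, and the touching
lines and their reflections give back `G_μ`.
-/

open ProbabilityTheory Real Filter Set Topology

local notation "Φ" => stdGaussianCDF

lemma stdGaussianCDF_eq_cdf : Φ = cdf (gaussianReal 0 1) := by
  ext x
  rw [cdf_eq_real, measureReal_def, stdGaussianCDF]

lemma stdGaussianCDF_eq_integral (x : ℝ) : Φ x = ∫ t in Iic x, gaussianPDFReal 0 1 t := by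
  rw [stdGaussianCDF, gaussianReal_apply_eq_integral 0 one_ne_zero, ENNReal.toReal_ofReal]
  exact setIntegral_nonneg measurableSet_Iic fun t _ => gaussianPDFReal_nonneg 0 1 t

lemma gaussianPDFReal_zero_one_neg (t : ℝ) : gaussianPDFReal 0 1 (-t) = gaussianPDFReal 0 1 t := by
  simp [gaussianPDFReal]

lemma gaussianPDFReal_zero_one_add (s m : ℝ) :
    gaussianPDFReal 0 1 (s + m) = gaussianPDFReal 0 1 s * rexp (-(s * m) - m ^ 2 / 2) := by
  simp only [gaussianPDFReal, NNReal.coe_one, mul_one, sub_zero, mul_assoc, ← Real.exp_add]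
  ring_nf

lemma hasDerivAt_stdGaussianCDF (x : ℝ) : HasDerivAt Φ (gaussianPDFReal 0 1 x) x := by
  have hcont : Continuous (gaussianPDFReal 0 1) := by
    unfold gaussianPDFReal; fun_prop
  have hint := integrable_gaussianPDFReal 0 1
  have h : ∀ y, Φ 0 + ∫ t in (0 : ℝ)..y, gaussianPDFReal 0 1 t = Φ y := fun y => by
    rw [stdGaussianCDF_eq_integral, stdGaussianCDF_eq_integral,
      ← intervalIntegral.integral_Iic_sub_Iic hint.integrableOn hint.integrableOn]
    ring
  exact ((hcont.integral_hasStrictDerivAt 0 x).hasDerivAt.const_add (Φ 0)).congr_of_eventuallyEq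
    (Eventually.of_forall fun y => (h y).symm)

lemma continuous_stdGaussianCDF : Continuous Φ :=
  continuous_iff_continuousAt.mpr fun x => (hasDerivAt_stdGaussianCDF x).continuousAt

lemma strictMono_stdGaussianCDF : StrictMono Φ :=
  strictMono_of_deriv_pos fun x => by
    rw [(hasDerivAt_stdGaussianCDF x).deriv]; exact gaussianPDFReal_pos 0 1 x one_ne_zero

lemma tendsto_stdGaussianCDF_atTop : Tendsto Φ atTop (𝓝 1) :=
  stdGaussianCDF_eq_cdf ▸ tendsto_cdf_atTop _

lemma tendsto_stdGaussianCDF_atBot : Tendsto Φ atBot (𝓝 0) :=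
  stdGaussianCDF_eq_cdf ▸ tendsto_cdf_atBot _

lemma stdGaussianCDF_nonneg (x : ℝ) : 0 ≤ Φ x := stdGaussianCDF_eq_cdf ▸ cdf_nonneg _ x

lemma stdGaussianCDF_le_one (x : ℝ) : Φ x ≤ 1 := stdGaussianCDF_eq_cdf ▸ cdf_le_one _ x

lemma stdGaussianCDF_pos (x : ℝ) : 0 < Φ x :=
  (stdGaussianCDF_nonneg (x - 1)).trans_lt (strictMono_stdGaussianCDF (by linarith))

lemma stdGaussianCDF_lt_one (x : ℝ) : Φ x < 1 :=
  (strictMono_stdGaussianCDF (lt_add_one x)).trans_le (stdGaussianCDF_le_one (x + 1))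

lemma stdGaussianCDF_neg (x : ℝ) : Φ (-x) = 1 - Φ x := by
  have hint := integrable_gaussianPDFReal 0 1
  have htail : Φ (-x) = ∫ t in Ioi x, gaussianPDFReal 0 1 t := by
    rw [stdGaussianCDF_eq_integral, ← integral_comp_neg_Ioi]
    simp only [gaussianPDFReal_zero_one_neg]
  rw [htail, stdGaussianCDF_eq_integral, ← integral_gaussianPDFReal_eq_one 0 one_ne_zero,
    ← intervalIntegral.integral_Iic_add_Ioi hint.integrableOn hint.integrableOn]
  ring

lemma exists_stdGaussianCDF_eq {y : ℝ} (hy : y ∈ Ioo 0 1) : ∃ x, Φ x = y := by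
  obtain ⟨a, ha⟩ := (tendsto_stdGaussianCDF_atBot.eventually_lt_const hy.1).exists
  obtain ⟨b, hb⟩ := (tendsto_stdGaussianCDF_atTop.eventually_const_lt hy.2).exists
  exact intermediate_value_univ a b continuous_stdGaussianCDF ⟨ha.le, hb.le⟩

lemma stdGaussianCDFInv_stdGaussianCDF (x : ℝ) : stdGaussianCDFInv (Φ x) = x :=
  Function.leftInverse_invFun strictMono_stdGaussianCDF.injective x

lemma Gmu_stdGaussianCDF (μ s : ℝ) : Gmu μ (Φ s) = 1 - Φ (s + μ) := by
  rw [Gmu, if_neg (stdGaussianCDF_pos s).not_ge, if_neg (stdGaussianCDF_lt_one s).not_ge,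
    ← stdGaussianCDF_neg, stdGaussianCDFInv_stdGaussianCDF, ← stdGaussianCDF_neg]
  ring_nf

noncomputable def gdpDelta (μ ε : ℝ) : ℝ :=
  Φ (-(ε / μ) + μ / 2) - rexp ε * Φ (-(ε / μ) - μ / 2)

lemma hasDerivAt_stdGaussianCDF_add_sub (μ ε s : ℝ) :
    HasDerivAt (fun s => Φ (s + μ) - rexp ε * Φ s)
      (gaussianPDFReal 0 1 s * (rexp (-(s * μ) - μ ^ 2 / 2) - rexp ε)) s := by
  have hshift := (hasDerivAt_stdGaussianCDF (s + μ)).comp_add_const s μ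
  refine (hshift.sub ((hasDerivAt_stdGaussianCDF s).const_mul (rexp ε))).congr_deriv ?_
  rw [gaussianPDFReal_zero_one_add]
  ring

/-- `s ↦ Φ(s + μ) - e^ε Φ(s)` is maximal at `s = -ε/μ - μ/2`, where it equals `δ(ε)`. -/
lemma stdGaussianCDF_add_sub_le_gdpDelta {μ : ℝ} (hμ : 0 < μ) (ε s : ℝ) :
    Φ (s + μ) - rexp ε * Φ s ≤ gdpDelta μ ε := by
  set f : ℝ → ℝ := fun s => Φ (s + μ) - rexp ε * Φ s
  set s₀ := -(ε / μ) - μ / 2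
  have hdiff : Differentiable ℝ f := fun s =>
    (hasDerivAt_stdGaussianCDF_add_sub μ ε s).differentiableAt
  have hδ : gdpDelta μ ε = f s₀ := by
    simp only [gdpDelta, f, s₀]
    ring_nf
  -- `-(s μ) - μ²/2 ≥ ε` exactly when `s ≤ s₀`
  have hs₀ : -(s₀ * μ) - μ ^ 2 / 2 = ε := by
    simp only [s₀]; field_simp; ring
  have hderiv (t : ℝ) :
      deriv f t = gaussianPDFReal 0 1 t * (rexp (-(t * μ) - μ ^ 2 / 2) - rexp ε) :=
    (hasDerivAt_stdGaussianCDF_add_sub μ ε t).deriv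
  rw [hδ]
  rcases le_total s s₀ with hs | hs
  · refine monotoneOn_of_deriv_nonneg (convex_Iic s₀) hdiff.continuous.continuousOn
      hdiff.differentiableOn (fun t ht => ?_) hs self_mem_Iic hs
    rw [interior_Iic] at ht
    rw [hderiv]
    refine mul_nonneg (gaussianPDFReal_nonneg 0 1 t) (sub_nonneg.mpr (exp_le_exp.mpr ?_))
    nlinarith [mem_Iio.mp ht]
  · refine antitoneOn_of_deriv_nonpos (convex_Ici s₀) hdiff.continuous.continuousOn
      hdiff.differentiableOn (fun t ht => ?_) self_mem_Ici hs hs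
    rw [interior_Ici] at ht
    rw [hderiv]
    refine mul_nonpos_of_nonneg_of_nonpos (gaussianPDFReal_nonneg 0 1 t)
      (sub_nonpos.mpr (exp_le_exp.mpr ?_))
    nlinarith [mem_Ioi.mp ht]

lemma gdpDelta_eq_stdGaussianCDF_add_sub {μ : ℝ} (hμ : μ ≠ 0) (s : ℝ) :
    gdpDelta μ (-(s * μ) - μ ^ 2 / 2) = Φ (s + μ) - rexp (-(s * μ) - μ ^ 2 / 2) * Φ s := by
  have hs : -((-(s * μ) - μ ^ 2 / 2) / μ) - μ / 2 = s := by field_simp; ring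
  rw [gdpDelta, hs, show -((-(s * μ) - μ ^ 2 / 2) / μ) + μ / 2 = s + μ by linarith]

lemma gdpDelta_nonneg {μ : ℝ} (hμ : 0 < μ) (ε : ℝ) : 0 ≤ gdpDelta μ ε := by
  have hlim : Tendsto (fun s => Φ (s + μ) - rexp ε * Φ s) atBot (𝓝 (0 - rexp ε * 0)) :=
    (tendsto_stdGaussianCDF_atBot.comp (tendsto_atBot_add_const_right _ μ tendsto_id)).sub
      (tendsto_stdGaussianCDF_atBot.const_mul _)
  rw [mul_zero, sub_zero] at hlim
  exact le_of_tendsto' hlim (stdGaussianCDF_add_sub_le_gdpDelta hμ ε)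

lemma tendsto_gdpDelta_atTop {μ : ℝ} (hμ : 0 < μ) : Tendsto (gdpDelta μ) atTop (𝓝 0) := by
  have hbound : Tendsto (fun ε => Φ (-(ε / μ) + μ / 2)) atTop (𝓝 0) :=
    tendsto_stdGaussianCDF_atBot.comp (tendsto_atBot_add_const_right _ _
      (tendsto_neg_atTop_atBot.comp (tendsto_id.atTop_div_const hμ)))
  refine squeeze_zero (gdpDelta_nonneg hμ) (fun ε => ?_) hbound
  exact sub_le_self _ (mul_nonneg (exp_pos ε).le (stdGaussianCDF_nonneg _))

lemma one_sub_Gmu_le {μ ε y : ℝ} (hμ : 0 < μ) (hε : 0 ≤ ε) (hy₀ : 0 ≤ y) (hy₁ : y ≤ 1) :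
    1 - Gmu μ y ≤ rexp ε * y + gdpDelta μ ε := by
  have hδ := gdpDelta_nonneg hμ ε
  rcases hy₀.eq_or_lt with rfl | hy₀
  · simp [Gmu, hδ]
  rcases hy₁.eq_or_lt with rfl | hy₁
  · simp only [Gmu, if_neg one_pos.not_ge, le_refl, if_true, mul_one]
    linarith [one_le_exp hε]
  obtain ⟨s, rfl⟩ := exists_stdGaussianCDF_eq ⟨hy₀, hy₁⟩
  rw [Gmu_stdGaussianCDF]
  linarith [stdGaussianCDF_add_sub_le_gdpDelta hμ ε s]

lemma Gmu_le_of_forall_le {μ α β : ℝ} (hμ : 0 < μ) (hβ : 0 ≤ β)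
    (h : ∀ ε, 0 ≤ ε →
      1 - β ≤ rexp ε * α + gdpDelta μ ε ∧ 1 - α ≤ rexp ε * β + gdpDelta μ ε) :
    Gmu μ α ≤ β := by
  rcases le_or_gt α 0 with hα₀ | hα₀
  · rw [Gmu, if_pos hα₀]
    have hlim := (tendsto_gdpDelta_atTop hμ).const_sub 1
    rw [sub_zero] at hlim
    refine le_of_tendsto hlim ?_
    filter_upwards [eventually_ge_atTop 0] with ε hε
    nlinarith [(h ε hε).1, exp_pos ε]
  rcases le_or_gt 1 α with hα₁ | hα₁
  · rwa [Gmu, if_neg hα₀.not_ge, if_pos hα₁]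
  obtain ⟨s, rfl⟩ := exists_stdGaussianCDF_eq ⟨hα₀, hα₁⟩
  rw [Gmu_stdGaussianCDF]
  -- Choose `ε` so that the maximiser above is `s` (first case) or `-s - μ` (second case).
  rcases le_total s (-(μ / 2)) with hs | hs
  · have := (h (-(s * μ) - μ ^ 2 / 2) (by nlinarith)).1
    rw [gdpDelta_eq_stdGaussianCDF_add_sub hμ.ne'] at this
    linarith
  · have := (h (-(-(s + μ) * μ) - μ ^ 2 / 2) (by nlinarith)).2
    rw [gdpDelta_eq_stdGaussianCDF_add_sub hμ.ne', show -(s + μ) + μ = -s by ring,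
      stdGaussianCDF_neg, stdGaussianCDF_neg] at this
    set E := rexp (-(-(s + μ) * μ) - μ ^ 2 / 2)
    have hE : E * (1 - Φ (s + μ)) ≤ E * β := by linarith
    exact le_of_mul_le_mul_left hE (exp_pos _)

section

variable {Ω : Type*} [MeasurableSpace Ω]

lemma integrable_of_mem_Icc {Q : Measure Ω} [IsFiniteMeasure Q] {φ : Ω → ℝ}
    (hφ : Measurable φ) (hφ01 : ∀ ω, φ ω ∈ Icc 0 1) : Integrable φ Q :=
  .of_bound hφ.aestronglyMeasurable 1 (ae_of_all _ fun ω => by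
    rw [Real.norm_eq_abs, abs_le]
    exact ⟨by linarith [(hφ01 ω).1], (hφ01 ω).2⟩)

lemma integral_one_sub {Q : Measure Ω} [IsProbabilityMeasure Q] {φ : Ω → ℝ}
    (hφ : Integrable φ Q) : ∫ ω, (1 - φ ω) ∂Q = 1 - ∫ ω, φ ω ∂Q := by
  rw [integral_sub (integrable_const 1) hφ, integral_const, probReal_univ, one_smul]

/-- Layer cake: a `[0,1]`-valued test is an average of indicators of its superlevel sets. -/
lemma lintegral_le_of_indist {ε δ : ℝ} {Q Q' : Measure Ω} (h : Indist ε δ Q Q') {φ : Ω → ℝ}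
    (hφ : Measurable φ) (hφ01 : ∀ ω, φ ω ∈ Icc 0 1) :
    ∫⁻ ω, ENNReal.ofReal (φ ω) ∂Q ≤
      ENNReal.ofReal (rexp ε) * ∫⁻ ω, ENNReal.ofReal (φ ω) ∂Q' + ENNReal.ofReal δ := by
  have hφ₀ (ω : Ω) : 0 ≤ φ ω := (hφ01 ω).1
  rw [lintegral_eq_lintegral_meas_le Q (ae_of_all _ hφ₀) hφ.aemeasurable,
    lintegral_eq_lintegral_meas_le Q' (ae_of_all _ hφ₀) hφ.aemeasurable]
  have hmeas : Measurable fun t => Q' {ω | t ≤ φ ω} :=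
    Antitone.measurable fun s t hst => measure_mono fun ω hω => hst.trans hω
  calc _ ≤ ∫⁻ t in Ioi 0, (ENNReal.ofReal (rexp ε) * Q' {ω | t ≤ φ ω} +
          (Iic 1).indicator (fun _ => ENNReal.ofReal δ) t) := by
        refine lintegral_mono fun t => ?_
        rcases le_or_gt t 1 with ht | ht
        · rw [indicator_of_mem (mem_Iic.mpr ht)]
          exact h _ (hφ measurableSet_Ici)
        · have hempty : {ω | t ≤ φ ω} = ∅ :=
            eq_empty_of_forall_notMem fun ω hω => (ht.trans_le hω).not_ge (hφ01 ω).2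
          simp [hempty]
    _ = _ := by
        rw [lintegral_add_left (hmeas.const_mul _), lintegral_const_mul _ hmeas,
          lintegral_indicator_const measurableSet_Iic, Measure.restrict_apply measurableSet_Iic,
          Iic_inter_Ioi, Real.volume_Ioc, sub_zero, ENNReal.ofReal_one, mul_one]

lemma integral_le_of_indist {ε δ : ℝ} (hδ : 0 ≤ δ) {Q Q' : Measure Ω} [IsFiniteMeasure Q']
    (h : Indist ε δ Q Q') {φ : Ω → ℝ} (hφ : Measurable φ) (hφ01 : ∀ ω, φ ω ∈ Icc 0 1) :
    ∫ ω, φ ω ∂Q ≤ rexp ε * ∫ ω, φ ω ∂Q' + δ := by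
  have hφ₀ (ω : Ω) : 0 ≤ φ ω := (hφ01 ω).1
  have hfin := (integrable_of_mem_Icc (Q := Q') hφ hφ01).lintegral_lt_top.ne
  rw [integral_eq_lintegral_of_nonneg_ae (ae_of_all _ hφ₀) hφ.aestronglyMeasurable,
    integral_eq_lintegral_of_nonneg_ae (ae_of_all _ hφ₀) hφ.aestronglyMeasurable]
  calc (∫⁻ ω, ENNReal.ofReal (φ ω) ∂Q).toReal
      ≤ (ENNReal.ofReal (rexp ε) * ∫⁻ ω, ENNReal.ofReal (φ ω) ∂Q' + ENNReal.ofReal δ).toReal :=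
        ENNReal.toReal_mono (by finiteness) (lintegral_le_of_indist h hφ hφ01)
    _ = rexp ε * (∫⁻ ω, ENNReal.ofReal (φ ω) ∂Q').toReal + δ := by
        rw [ENNReal.toReal_add (by finiteness) (by finiteness), ENNReal.toReal_mul,
          ENNReal.toReal_ofReal (exp_pos ε).le, ENNReal.toReal_ofReal hδ]

variable {P P' : Measure Ω} [IsProbabilityMeasure P] [IsProbabilityMeasure P']

lemma indist_of_satisfiesTradeoff {μ ε : ℝ} (hμ : 0 < μ) (hε : 0 ≤ ε)
    (h : SatisfiesTradeoff P' P (Gmu μ)) : Indist ε (gdpDelta μ ε) P P' := by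
  intro S hS
  have hindicator : Measurable (S.indicator (1 : Ω → ℝ)) := measurable_one.indicator hS
  have hindicator01 (ω : Ω) : S.indicator 1 ω ∈ Icc (0 : ℝ) 1 := by
    by_cases hω : ω ∈ S <;> simp [hω]
  have htest := h _ hindicator hindicator01
  rw [integral_indicator_one hS, integral_one_sub (integrable_of_mem_Icc hindicator hindicator01),
    integral_indicator_one hS] at htest
  have hreal : P.real S ≤ rexp ε * P'.real S + gdpDelta μ ε := by
    linarith [one_sub_Gmu_le hμ hε (y := P'.real S) measureReal_nonneg measureReal_le_one]
  calc P S = ENNReal.ofReal (P.real S) := (ofReal_measureReal (measure_ne_top P S)).symm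
    _ ≤ ENNReal.ofReal (rexp ε * P'.real S) + ENNReal.ofReal (gdpDelta μ ε) :=
        (ENNReal.ofReal_le_ofReal hreal).trans ENNReal.ofReal_add_le
    _ = ENNReal.ofReal (rexp ε) * P' S + ENNReal.ofReal (gdpDelta μ ε) := by
        rw [ENNReal.ofReal_mul (exp_pos ε).le, ofReal_measureReal (measure_ne_top P' S)]

lemma satisfiesTradeoff_of_indist {μ : ℝ} (hμ : 0 < μ)
    (h : ∀ ε, 0 ≤ ε → Indist ε (gdpDelta μ ε) P P' ∧ Indist ε (gdpDelta μ ε) P' P) :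
    SatisfiesTradeoff P P' (Gmu μ) := by
  intro φ hφ hφ01
  have hψ01 (ω : Ω) : 1 - φ ω ∈ Icc 0 1 := ⟨by linarith [(hφ01 ω).2], by linarith [(hφ01 ω).1]⟩
  refine Gmu_le_of_forall_le hμ (integral_nonneg fun ω => (hψ01 ω).1) fun ε hε => ⟨?_, ?_⟩
  · have := integral_le_of_indist (gdpDelta_nonneg hμ ε) (h ε hε).2 hφ hφ01
    rw [integral_one_sub (integrable_of_mem_Icc hφ hφ01)]
    linarith
  · have := integral_le_of_indist (gdpDelta_nonneg hμ ε) (h ε hε).1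
      (φ := fun ω => 1 - φ ω) (by fun_prop) hψ01
    rwa [integral_one_sub (integrable_of_mem_Icc hφ hφ01)] at this

end

/-- conversion from `μ`-GDP to `(ε,δ)`-DP: for `μ > 0` and probability
measures `P`, `P'`, the following are equivalent: (i) both `(P,P')` and `(P',P)` satisfy
the trade-off bound `G_μ`; (ii) for every `ε ≥ 0`, `P` and `P'` are
`(ε, δ(ε))`-indistinguishable in both orders with
`δ(ε) = Φ(−ε/μ + μ/2) − e^ε·Φ(−ε/μ − μ/2)`. -/
theorem stmt_13 {Ω : Type*} [MeasurableSpace Ω] (μ : ℝ) (hμ : 0 < μ)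
    (P P' : Measure Ω) [IsProbabilityMeasure P] [IsProbabilityMeasure P'] :
    (SatisfiesTradeoff P P' (Gmu μ) ∧ SatisfiesTradeoff P' P (Gmu μ)) ↔
      ∀ ε : ℝ, 0 ≤ ε →
        Indist ε (stdGaussianCDF (-(ε / μ) + μ / 2) -
            Real.exp ε * stdGaussianCDF (-(ε / μ) - μ / 2)) P P' ∧
        Indist ε (stdGaussianCDF (-(ε / μ) + μ / 2) -
            Real.exp ε * stdGaussianCDF (-(ε / μ) - μ / 2)) P' P := by
  constructor
  · rintro ⟨h, h'⟩ ε hε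
    exact ⟨indist_of_satisfiesTradeoff hμ hε h', indist_of_satisfiesTradeoff hμ hε h⟩
  · intro h
    exact ⟨satisfiesTradeoff_of_indist hμ h,
      satisfiesTradeoff_of_indist hμ fun ε hε => (h ε hε).symm⟩
end
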